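/- arXiv:math/9804013 — 7 statements merged into one kernel-verified Lean document; each statement's English description precedes it below -/
import Mathlib

section
/- Let k be a field and g an n×n matrix over O = k[X] with det g ≠ 0. Let g·Oⁿ denote the O-submodule of Oⁿ generated by the columns of g. Then the quotient Oⁿ/(g·Oⁿ) is a finite-dimensional k-vector space whose dimension equals the degree of det g. -/
/-!
Over the principal ideal domain `k[X]`, the Smith normal form provides bases of `Oⁿ` and of
`g·Oⁿ` in which the inclusion is diagonal with nonzero entries `a₁, …, aₙ`. Hence
`Oⁿ/(g·Oⁿ) ≅ ∏ k[X]/(aᵢ)`, of `k`-dimension `∑ deg aᵢ`, while `det g` is a unit multiple of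
`∏ aᵢ`.
-/

open Module Polynomial

namespace Submodule

variable {ι R M : Type*} [CommRing R] [IsDomain R] [IsPrincipalIdealRing R]
  [AddCommGroup M] [Module R M] [Fintype ι] [DecidableEq ι]

theorem associated_det_prod_smithNormalFormCoeffs {N : Submodule R M} (b : Basis ι R M)
    (e : M ≃ₗ[R] N) :
    Associated (LinearMap.det (N.subtype ∘ₗ e.toLinearMap))
      (∏ i, smithNormalFormCoeffs b e.symm.finrank_eq i) := by
  set h := e.symm.finrank_eq
  set b' := smithNormalFormTopBasis b h
  let e' : M ≃ₗ[R] N := b'.equiv (smithNormalFormBotBasis b h) (Equiv.refl ι)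
  have hdiag : N.subtype ∘ₗ e'.toLinearMap =
      Matrix.toLin b' b' (Matrix.diagonal (smithNormalFormCoeffs b h)) :=
    b'.ext fun i ↦ by simp [e', b', Matrix.toLin_self, Matrix.diagonal_apply]
  refine (LinearMap.associated_det_comp_equiv N.subtype e e').trans ?_
  rw [hdiag, LinearMap.det_toLin, Matrix.det_diagonal]

end Submodule

theorem LinearMap.injective_of_det_ne_zero {R M : Type*} [CommRing R] [IsDomain R]
    [AddCommGroup M] [Module R M] [Module.Free R M] [Module.Finite R M] {f : M →ₗ[R] M}
    (hf : f.det ≠ 0) : Function.Injective f :=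
  ker_eq_bot.mp (not_not.mp (mt det_eq_zero_iff_ker_ne_bot.mpr hf))

namespace Polynomial

theorem natDegree_eq_of_associated {R : Type*} [CommRing R] [IsDomain R] {p q : R[X]}
    (h : Associated p q) : p.natDegree = q.natDegree :=
  natDegree_eq_natDegree (degree_eq_degree_of_associated h)

variable {k : Type*} [Field k] {p : k[X]}

theorem finite_quotient_span_singleton (hp : p ≠ 0) :
    Module.Finite k (k[X] ⧸ Ideal.span {p}) :=
  (AdjoinRoot.powerBasis hp).finite

theorem finrank_quotient_span_singleton (hp : p ≠ 0) :
    finrank k (k[X] ⧸ Ideal.span {p}) = p.natDegree :=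
  (AdjoinRoot.powerBasis hp).finrank

end Polynomial

namespace LinearMap

variable {k M : Type*} [Field k] [AddCommGroup M] [Module k[X] M] [Module k M]
  [IsScalarTower k k[X] M] [Module.Free k[X] M] [Module.Finite k[X] M] {f : M →ₗ[k[X]] M}

theorem finite_quotient_range_of_det_ne_zero (hf : f.det ≠ 0) :
    Module.Finite k (M ⧸ range f) := by
  let b := Module.Free.chooseBasis k[X] M
  let h := (LinearEquiv.ofInjective f (injective_of_det_ne_zero hf)).symm.finrank_eq
  have := fun i ↦ finite_quotient_span_singleton (Submodule.smithNormalFormCoeffs_ne_zero b h i)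
  exact Module.Finite.equiv (((range f).quotientEquivPiSpan b h).restrictScalars k).symm

theorem finrank_quotient_range_eq_natDegree_det (hf : f.det ≠ 0) :
    finrank k (M ⧸ range f) = f.det.natDegree := by
  classical
  let b := Module.Free.chooseBasis k[X] M
  let e := LinearEquiv.ofInjective f (injective_of_det_ne_zero hf)
  have ha := Submodule.smithNormalFormCoeffs_ne_zero b e.symm.finrank_eq
  have := fun i ↦ finite_quotient_span_singleton (ha i)
  change _ = (LinearMap.det ((range f).subtype ∘ₗ e.toLinearMap)).natDegree
  rw [Submodule.finrank_quotient_eq_sum k b e.symm.finrank_eq,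
    natDegree_eq_of_associated (Submodule.associated_det_prod_smithNormalFormCoeffs b e),
    natDegree_prod _ _ fun i _ ↦ ha i]
  exact Finset.sum_congr rfl fun i _ ↦ finrank_quotient_span_singleton (ha i)

end LinearMap

theorem stmt3 (k : Type*) [Field k] (n : ℕ)
    (g : Matrix (Fin n) (Fin n) (Polynomial k)) (hg : g.det ≠ 0) :
    Module.Finite k ((Fin n → Polynomial k) ⧸ LinearMap.range g.mulVecLin) ∧
    Module.finrank k ((Fin n → Polynomial k) ⧸ LinearMap.range g.mulVecLin) =
      g.det.natDegree := by
  have hdet : LinearMap.det g.mulVecLin = g.det := by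
    rw [← Matrix.toLin'_apply', LinearMap.det_toLin']
  exact ⟨LinearMap.finite_quotient_range_of_det_ne_zero (hdet ▸ hg),
    hdet ▸ LinearMap.finrank_quotient_range_eq_natDegree_det (hdet ▸ hg)⟩
end

section
/- Let R be an O-submodule of Oⁿ with dim_k(Oⁿ/R) finite. Then there exist unique monic polynomials P_1, …, P_n ∈ O and unique polynomials R_{ij} ∈ O for 1 ≤ j < i ≤ n with deg(R_{ij}) < deg(P_j), such that R is generated as an O-module by the n vectors v_i = P_i·e_i + Σ_{j<i} R_{ij}·e_j (i = 1, …, n). -/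
/-!
The coordinates `x i` of the vectors `x ∈ R` vanishing beyond `i` form an ideal of `k[X]`, the
pivot ideal at `i`. Finiteness of the quotient makes it nonzero, so it has a monic generator `P i`,
realised by a vector of `R`; reducing these vectors against each other from the last coordinate
down (division with remainder by the `P j`) gives the required generators.

For uniqueness, any lower triangular family with monic diagonal spanning `R` has its diagonal
entries as generators of the pivot ideals, which pins down the `P i`. Two families of the required
shape then differ by vectors of `R` whose coordinates all have degree below the corresponding `P l`,
and such a vector vanishes, by downward induction on the coordinate.
-/

open Polynomial Submodule Set

theorem Polynomial.Monic.eq_of_dvd_of_dvd {A : Type*} [CommSemiring A] {p q : A[X]}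
    (hp : p.Monic) (hq : q.Monic) (hpq : p ∣ q) (hqp : q ∣ p) : p = q := by
  obtain ⟨r, rfl⟩ := hqp
  refine (eq_of_monic_of_dvd_of_natDegree_le hp hq hpq ?_).symm
  rw [hq.natDegree_mul (hq.of_mul_monic_left hp)]
  exact Nat.le_add_right _ _

theorem Polynomial.exists_monic_and_eq_span {k : Type*} [Field k] (I : Ideal k[X])
    (hI : I ≠ ⊥) :
    ∃ P : k[X], P.Monic ∧ I = Ideal.span {P} := by
  classical
  obtain ⟨g, rfl⟩ := (IsPrincipalIdealRing.principal I).principal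
  have hg : g ≠ 0 := by rintro rfl; simp at hI
  exact ⟨normalize g, monic_normalize hg,
    Ideal.span_singleton_eq_span_singleton.mpr (associated_normalize g)⟩

section HermiteBasis

variable {A ι : Type*} [CommRing A] [LinearOrder ι]

def pivotIdeal (N : Submodule A (ι → A)) (i : ι) : Ideal A where
  carrier := {a | ∃ x ∈ N, (∀ l, i < l → x l = 0) ∧ x i = a}
  add_mem' := by
    rintro _ _ ⟨x, hx, hx0, rfl⟩ ⟨y, hy, hy0, rfl⟩
    exact ⟨x + y, add_mem hx hy, fun l hl => by simp [hx0 l hl, hy0 l hl], rfl⟩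
  zero_mem' := ⟨0, zero_mem _, fun _ _ => rfl, rfl⟩
  smul_mem' := by
    rintro c _ ⟨x, hx, hx0, rfl⟩
    exact ⟨c • x, smul_mem _ c hx, fun l hl => by simp [hx0 l hl], rfl⟩

theorem mem_pivotIdeal {N : Submodule A (ι → A)} {i : ι} {a : A} :
    a ∈ pivotIdeal N i ↔ ∃ x ∈ N, (∀ l, i < l → x l = 0) ∧ x i = a :=
  Iff.rfl

structure IsMonicLowerTriangular (v : ι → ι → A[X]) : Prop where
  monic_diag : ∀ i, (v i i).Monic
  eq_zero_of_lt : ∀ ⦃i l⦄, i < l → v i l = 0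

namespace IsMonicLowerTriangular

variable {v : ι → ι → A[X]}

theorem sum_smul_apply [Fintype ι] (hv : IsMonicLowerTriangular v) {c : ι → A[X]} {l : ι}
    (hc : ∀ j, l < j → c j = 0) :
    (∑ j, c j • v j) l = c l * v l l := by
  rw [Finset.sum_apply, Finset.sum_eq_single l]
  · rfl
  · intro j _ hjl
    rcases hjl.lt_or_gt with hj | hj
    · simp [hv.eq_zero_of_lt hj]
    · simp [hc j hj]
  · simp

theorem pivotIdeal_span_eq [Fintype ι] (hv : IsMonicLowerTriangular v) (i : ι) :
    pivotIdeal (span A[X] (range v)) i = Ideal.span {v i i} := by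
  refine le_antisymm ?_ ?_
  · rintro _ ⟨x, hx, hx0, rfl⟩
    obtain ⟨c, rfl⟩ := (mem_span_range_iff_exists_fun A[X]).mp hx
    have hc : ∀ j, i < j → c j = 0 := by
      intro j
      induction j using WellFoundedGT.induction with
      | _ j ih =>
        intro hij
        have hj := hv.sum_smul_apply fun l hl => ih l hl (hij.trans hl)
        rw [hx0 j hij, eq_comm, (hv.monic_diag j).mul_left_eq_zero_iff] at hj
        exact hj
    rw [hv.sum_smul_apply hc, Ideal.mem_span_singleton]
    exact dvd_mul_left _ _
  · rw [Ideal.span_le, singleton_subset_iff]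
    exact ⟨v i, subset_span (mem_range_self i), fun l hl => hv.eq_zero_of_lt hl, rfl⟩

end IsMonicLowerTriangular

theorem eq_zero_of_mem_of_degree_lt [Finite ι] {N : Submodule A[X] (ι → A[X])} {P : ι → A[X]}
    (hP : ∀ i, (P i).Monic) (hN : ∀ i, pivotIdeal N i ≤ Ideal.span {P i})
    {x : ι → A[X]} (hx : x ∈ N) {s : Set ι} (hs : IsUpperSet s)
    (hdeg : ∀ l ∈ s, (x l).degree < (P l).degree) : ∀ l ∈ s, x l = 0 := by
  intro i
  induction i using WellFoundedGT.induction with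
  | _ i ih =>
    intro hi
    by_contra hxi
    refine (hP i).not_dvd_of_degree_lt hxi (hdeg i hi) (Ideal.mem_span_singleton.mp (hN i ?_))
    exact ⟨x, hx, fun l hl => ih l hl (hs hl.le hi), rfl⟩

structure IsHermiteBasis (N : Submodule A[X] (ι → A[X])) (v : ι → ι → A[X]) : Prop
    extends IsMonicLowerTriangular v where
  degree_lt : ∀ ⦃i l⦄, l < i → (v i l).degree < (v l l).degree
  span_eq : span A[X] (range v) = N

namespace IsHermiteBasis

variable {N : Submodule A[X] (ι → A[X])} {v w : ι → ι → A[X]}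

theorem pivotIdeal_eq [Fintype ι] (hv : IsHermiteBasis N v) (i : ι) :
    pivotIdeal N i = Ideal.span {v i i} :=
  hv.span_eq ▸ hv.pivotIdeal_span_eq i

theorem unique [Fintype ι] [Nontrivial A] (hv : IsHermiteBasis N v) (hw : IsHermiteBasis N w) :
    v = w := by
  have hdiag : ∀ i, v i i = w i i := fun i =>
    (hv.monic_diag i).eq_of_dvd_of_dvd (hw.monic_diag i)
      (Ideal.span_singleton_le_span_singleton.mp (hv.pivotIdeal_eq i ▸ (hw.pivotIdeal_eq i).ge))
      (Ideal.span_singleton_le_span_singleton.mp (hw.pivotIdeal_eq i ▸ (hv.pivotIdeal_eq i).ge))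
  have hbot : ∀ l, ⊥ < (v l l).degree := fun l =>
    bot_lt_iff_ne_bot.mpr (degree_eq_bot.not.mpr (hv.monic_diag l).ne_zero)
  funext i
  refine sub_eq_zero.mp (funext fun l => eq_zero_of_mem_of_degree_lt hv.monic_diag
    (fun i => (hv.pivotIdeal_eq i).le) (sub_mem ?_ ?_) isUpperSet_univ (fun l _ => ?_) l trivial)
  · exact hv.span_eq ▸ subset_span (mem_range_self i)
  · exact hw.span_eq ▸ subset_span (mem_range_self i)
  rcases lt_trichotomy l i with hl | rfl | hl
  · refine (degree_sub_le _ _).trans_lt (max_lt (hv.degree_lt hl) ?_)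
    exact hdiag l ▸ hw.degree_lt hl
  · simpa [hdiag l] using hbot l
  · simpa [hv.eq_zero_of_lt hl, hw.eq_zero_of_lt hl] using hbot l

end IsHermiteBasis

theorem isHermiteBasis_ite_iff {N : Submodule A[X] (ι → A[X])} {P : ι → A[X]}
    {Q : ι → ι → A[X]} :
    (IsHermiteBasis N (fun i l => if l = i then P i else Q i l) ∧
      ∀ i j, ¬ j < i → Q i j = 0) ↔
      (∀ i, (P i).Monic) ∧ (∀ i j, j < i → (Q i j).degree < (P j).degree) ∧
      (∀ i j, ¬ j < i → Q i j = 0) ∧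
      N = span A[X] (range fun i l => if l = i then P i else Q i l) := by
  constructor
  · rintro ⟨hv, hQ⟩
    refine ⟨fun i => by simpa using hv.monic_diag i, fun i j hj => ?_, hQ, hv.span_eq.symm⟩
    simpa [hj.ne] using hv.degree_lt hj
  · rintro ⟨hP, hdeg, hQ, hN⟩
    refine ⟨⟨⟨fun i => by simpa using hP i, fun i l hl => ?_⟩, fun i l hl => ?_, hN.symm⟩,
      hQ⟩
    · simpa [hl.ne'] using hQ i l hl.not_gt
    · simpa [hl.ne] using hdeg i l hl

section Existence

variable [Nontrivial A] {n : ℕ} {N : Submodule A[X] (Fin n → A[X])}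
  {u : Fin n → Fin n → A[X]}

theorem IsMonicLowerTriangular.exists_mem_span_degree_sub_lt (hu : IsMonicLowerTriangular u)
    (x : Fin n → A[X]) :
    ∃ y ∈ span A[X] (range u), ∀ l, ((x - y) l).degree < (u l l).degree := by
  -- division with remainder by the diagonal entries, from the last coordinate down
  suffices h : ∀ m : ℕ, ∀ x : Fin n → A[X],
      (∀ l : Fin n, m ≤ l → (x l).degree < (u l l).degree) →
      ∃ y ∈ span A[X] (range u), ∀ l, ((x - y) l).degree < (u l l).degree from
    h n x fun l hl => absurd l.isLt hl.not_gt
  intro m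
  induction m with
  | zero => exact fun x hx => ⟨0, zero_mem _, by simpa using fun l => hx l l.val.zero_le⟩
  | succ m ih =>
    intro x hx
    rcases lt_or_ge m n with hm | hm
    · set j : Fin n := ⟨m, hm⟩
      set q := x j /ₘ u j j
      obtain ⟨y, hy, hxy⟩ := ih (x - q • u j) fun l hl => by
        rcases hl.eq_or_lt with hl | hl
        · obtain rfl : j = l := Fin.ext hl
          have hmod := modByMonic_add_div (x j) (u j j)
          rw [Pi.sub_apply, Pi.smul_apply, smul_eq_mul, mul_comm, ← hmod, add_sub_cancel_right]
          exact degree_modByMonic_lt _ (hu.monic_diag j)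
        · simpa [hu.eq_zero_of_lt (show j < l from hl)] using hx l hl
      refine ⟨q • u j + y, add_mem (smul_mem _ _ (subset_span (mem_range_self j))) hy, ?_⟩
      simpa only [sub_add_eq_sub_sub] using hxy
    · exact ih x fun l hl => absurd l.isLt (by omega)

theorem IsMonicLowerTriangular.exists_reduced_row (hu : IsMonicLowerTriangular u)
    (huN : ∀ i, u i ∈ N) (hN : ∀ i, pivotIdeal N i ≤ Ideal.span {u i i}) (i : Fin n) :
    ∃ w ∈ N, (∀ l, i ≤ l → w l = u i l) ∧
      ∀ l, l < i → (w l).degree < (u l l).degree := by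
  set x : Fin n → A[X] := u i - Pi.single i (u i i)
  have hx : ∀ l, i ≤ l → x l = 0 := by
    intro l hl
    rcases hl.eq_or_lt with rfl | hl
    · simp [x]
    · simp [x, hu.eq_zero_of_lt hl, hl.ne']
  obtain ⟨y, hy, hdeg⟩ := hu.exists_mem_span_degree_sub_lt x
  have hyN : y ∈ N := span_le.mpr (range_subset_iff.mpr huN) hy
  have hy0 : ∀ l, i ≤ l → y l = 0 :=
    eq_zero_of_mem_of_degree_lt hu.monic_diag hN hyN (isUpperSet_Ici i) fun l hl => by
      simpa [hx l hl] using hdeg l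
  refine ⟨u i - y, sub_mem (huN i) hyN, fun l hl => by simp [hy0 l hl], fun l hl => ?_⟩
  simpa [x, hl.ne] using hdeg l

theorem IsMonicLowerTriangular.exists_isHermiteBasis (hu : IsMonicLowerTriangular u)
    (huN : ∀ i, u i ∈ N) (hN : ∀ i, pivotIdeal N i ≤ Ideal.span {u i i}) :
    ∃ w, IsHermiteBasis N w := by
  choose w hwN hw_eq hw_deg using hu.exists_reduced_row huN hN
  have hdiag : ∀ i, w i i = u i i := fun i => hw_eq i i le_rfl
  have hw : IsMonicLowerTriangular w :=
    ⟨fun i => hdiag i ▸ hu.monic_diag i,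
      fun i l hl => (hw_eq i l hl.le).trans (hu.eq_zero_of_lt hl)⟩
  refine ⟨w, hw, fun i l hl => hdiag l ▸ hw_deg i l hl, ?_⟩
  refine le_antisymm (span_le.mpr (range_subset_iff.mpr hwN)) fun x hx => ?_
  obtain ⟨y, hy, hdeg⟩ := hw.exists_mem_span_degree_sub_lt x
  have hxy : x - y = 0 := funext fun l =>
    eq_zero_of_mem_of_degree_lt hu.monic_diag hN
      (sub_mem hx (span_le.mpr (range_subset_iff.mpr hwN) hy)) isUpperSet_univ
      (fun l _ => hdiag l ▸ hdeg l) l trivial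
  exact sub_eq_zero.mp hxy ▸ hy

end Existence

section Field

variable {k : Type*} [Field k]

theorem exists_ne_zero_smul_mem {M : Type*} [AddCommGroup M] [Module k[X] M] [Module k M]
    [IsScalarTower k k[X] M] (N : Submodule k[X] M) [Module.Finite k (M ⧸ N)] (x : M) :
    ∃ p : k[X], p ≠ 0 ∧ p • x ∈ N := by
  let f : k[X] →ₗ[k] M ⧸ N :=
    (N.mkQ ∘ₗ LinearMap.toSpanSingleton k[X] M x).restrictScalars k
  have hf : ¬ Function.Injective f := fun hf => not_finite (Module.Finite.of_injective f hf)
  obtain ⟨a, b, hab, hne⟩ := Function.not_injective_iff.mp hf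
  refine ⟨a - b, sub_ne_zero.mpr hne, (Submodule.Quotient.mk_eq_zero N).mp ?_⟩
  simpa [f, sub_smul, sub_eq_zero] using hab

theorem pivotIdeal_ne_bot {n : ℕ} (N : Submodule k[X] (Fin n → k[X]))
    [Module.Finite k ((Fin n → k[X]) ⧸ N)] (i : Fin n) : pivotIdeal N i ≠ ⊥ := by
  obtain ⟨p, hp, hpN⟩ := exists_ne_zero_smul_mem N (Pi.single i 1)
  refine (Submodule.ne_bot_iff _).mpr ⟨p, ⟨_, hpN, fun l hl => ?_, by simp⟩, hp⟩
  simp [hl.ne']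

theorem exists_isHermiteBasis {n : ℕ} (N : Submodule k[X] (Fin n → k[X]))
    [Module.Finite k ((Fin n → k[X]) ⧸ N)] : ∃ v, IsHermiteBasis N v := by
  choose P hP hNP using fun i => exists_monic_and_eq_span _ (pivotIdeal_ne_bot N i)
  choose u huN hu0 hu using fun i =>
    mem_pivotIdeal.mp (hNP i ▸ Ideal.mem_span_singleton_self (P i))
  have hu_tri : IsMonicLowerTriangular u := ⟨fun i => hu i ▸ hP i, fun i l hl => hu0 i l hl⟩
  exact hu_tri.exists_isHermiteBasis huN fun i => (hNP i).trans_le (by rw [hu i])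

end Field

end HermiteBasis

theorem stmt7 (k : Type*) [Field k] (n : ℕ)
    (R : Submodule (Polynomial k) (Fin n → Polynomial k))
    (hfin : Module.Finite k ((Fin n → Polynomial k) ⧸ R)) :
    ∃! PR : (Fin n → Polynomial k) × (Fin n → Fin n → Polynomial k),
      (∀ i : Fin n, (PR.1 i).Monic) ∧
      (∀ i j : Fin n, j < i → (PR.2 i j).degree < (PR.1 j).degree) ∧
      (∀ i j : Fin n, ¬ j < i → PR.2 i j = 0) ∧
      R = Submodule.span (Polynomial k)
        (Set.range fun i : Fin n => fun l : Fin n =>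
          if l = i then PR.1 i else PR.2 i l) := by
  obtain ⟨v, hv⟩ := exists_isHermiteBasis R
  have hv_ite : (fun i l => if l = i then v i i else if l < i then v i l else 0) = v := by
    funext i l
    rcases lt_trichotomy l i with h | rfl | h
    · simp [h.ne, h]
    · simp
    · simp [h.ne', h.not_gt, hv.eq_zero_of_lt h]
  refine ⟨(fun i => v i i, fun i j => if j < i then v i j else 0), isHermiteBasis_ite_iff.mp
    ⟨(congrArg (IsHermiteBasis R) hv_ite).mpr hv, fun i j h => if_neg h⟩, ?_⟩
  rintro ⟨P, Q⟩ h
  obtain ⟨hPQ, hQ⟩ := isHermiteBasis_ite_iff.mpr h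
  have heq := hPQ.unique hv
  refine Prod.ext (funext fun i => by simpa using congrFun₂ heq i i) (funext₂ fun i j => ?_)
  dsimp only
  split_ifs with hj
  · simpa [hj.ne] using congrFun₂ heq i j
  · exact hQ i j hj
end

section
/- Let k be a finite field with q elements and let P_1, …, P_n ∈ k[X] be monic polynomials. Then the number of O-submodules R of Oⁿ that are generated by n vectors of the form v_i = P_i·e_i + Σ_{j<i} R_{ij}·e_j with R_{ij} ∈ O and deg(R_{ij}) < deg(P_j) for 1 ≤ j < i ≤ n, equals q raised to the power Σ_{j=1}^n (n−j)·deg(P_j). -/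
open Polynomial Finset

private noncomputable def vv {k : Type*} [Field k] {n : ℕ} (P : Fin n → Polynomial k)
    (M : Fin n → Fin n → Polynomial k) (i : Fin n) : Fin n → Polynomial k :=
  fun l => if l = i then P i else if l < i then M i l else 0

private lemma key {k : Type*} [Field k] {n : ℕ} (P : Fin n → Polynomial k)
    (hP : ∀ i, (P i).Monic) (M M' : Fin n → Fin n → Polynomial k)
    (hM : ∀ i j, j < i → (M i j).degree < (P j).degree)
    (hM' : ∀ i j, j < i → (M' i j).degree < (P j).degree)
    (i : Fin n)
    (hmem : vv P M' i ∈ Submodule.span (Polynomial k) (Set.range (vv P M))) :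
    ∀ j, j < i → M i j = M' i j := by
  obtain ⟨c, hc⟩ := (Submodule.mem_span_range_iff_exists_fun _).1 hmem
  have hcl : ∀ l, ∑ j, c j * vv P M j l = vv P M' i l := by
    intro l
    have h1 := congrFun hc l
    simpa [Finset.sum_apply] using h1
  set Q : Fin n → Prop :=
    fun l => c l = (if l = i then 1 else 0) ∧ (l < i → M i l = M' i l) with hQdef
  have step : ∀ l : Fin n, (∀ j, l < j → Q j) → Q l := by
    intro l ih
    have heq := hcl l
    set f : Fin n → Polynomial k := fun j => c j * vv P M j l with hf
    have hf0 : ∀ j, j ≠ l → j ≠ i → f j = 0 := by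
      intro j hjl hji
      rcases lt_or_gt_of_ne hjl with h | h
      · have hz : vv P M j l = 0 := by
          simp [vv, h.ne', asymm h]
        simp [hf, hz]
      · have hcz := (ih j h).1
        rw [if_neg hji] at hcz
        simp [hf, hcz]
    by_cases hli : l = i
    · subst hli
      have hsum : ∑ j, f j = f l :=
        Finset.sum_eq_single l (fun b _ hb => hf0 b hb hb) (by simp)
      have hfl : f l = c l * P l := by simp [hf, vv]
      have hrhs : vv P M' l l = P l := by simp [vv]
      rw [hsum, hfl, hrhs] at heq
      have hz : (c l - 1) * P l = 0 := by rw [sub_mul, one_mul, heq, sub_self]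
      have hcl1 : c l = 1 := by
        rcases mul_eq_zero.1 hz with h | h
        · exact sub_eq_zero.1 h
        · exact absurd h (hP l).ne_zero
      exact ⟨by simp [hcl1], fun h => absurd h (lt_irrefl l)⟩
    · have hsum : ∑ j, f j = f l + f i := by
        rw [← Finset.sum_subset (Finset.subset_univ {l, i})
          (fun x _ hx => by
            simp only [Finset.mem_insert, Finset.mem_singleton, not_or] at hx
            exact hf0 x hx.1 hx.2),
          Finset.sum_pair hli]
      have hfl : f l = c l * P l := by simp [hf, vv]
      rcases lt_or_gt_of_ne (Ne.intro hli) with h | h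
      · -- l < i
        have hci : c i = 1 := by
          have := (ih i h).1
          rwa [if_pos rfl] at this
        have hfi : f i = M i l := by
          simp [hf, vv, hli, h, hci]
        have hrhs : vv P M' i l = M' i l := by simp [vv, hli, h]
        rw [hsum, hfl, hfi, hrhs] at heq
        have hclP : c l * P l = M' i l - M i l := eq_sub_of_add_eq heq
        have hdeg : (M' i l - M i l).degree < (P l).degree :=
          lt_of_le_of_lt (degree_sub_le _ _) (max_lt (hM' i l h) (hM i l h))
        have hc0 : c l = 0 := by
          by_contra hc0
          have h1 : (P l).degree ≤ (c l * P l).degree := by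
            rw [degree_mul]
            exact le_add_of_nonneg_left (zero_le_degree_iff.2 hc0)
          rw [hclP] at h1
          exact absurd hdeg (not_lt.2 h1)
        have hMeq : M' i l - M i l = 0 := by rw [← hclP, hc0, zero_mul]
        exact ⟨by simp [hli, hc0], fun _ => (sub_eq_zero.1 hMeq).symm⟩
      · -- i < l
        have hfi : f i = 0 := by
          simp [hf, vv, hli, asymm h]
        have hrhs : vv P M' i l = 0 := by simp [vv, hli, asymm h]
        rw [hsum, hfl, hfi, hrhs, add_zero] at heq
        have hc0 : c l = 0 := by
          rcases mul_eq_zero.1 heq with h' | h'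
          · exact h'
          · exact absurd h' (hP l).ne_zero
        exact ⟨by simp [hli, hc0], fun h' => absurd h' (asymm h)⟩
  have hQ : ∀ l, Q l :=
    fun l => (IsWellFounded.wf (r := ((· > ·) : Fin n → Fin n → Prop))).induction l step
  exact fun j hj => (hQ j).2 hj

private def Tt (k : Type*) [Field k] {n : ℕ} (P : Fin n → Polynomial k) : Type _ :=
  ∀ _p : {p : Fin n × Fin n // p.2 < p.1}, Polynomial.degreeLT k ((P _p.1.2).natDegree)

private noncomputable def Mt {k : Type*} [Field k] {n : ℕ} {P : Fin n → Polynomial k}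
    (t : Tt k P) : Fin n → Fin n → Polynomial k :=
  fun i j => if h : j < i then (t ⟨(i, j), h⟩ : Polynomial k) else 0

private lemma Mt_deg {k : Type*} [Field k] {n : ℕ} {P : Fin n → Polynomial k}
    (hP : ∀ i, (P i).Monic) (t : Tt k P) :
    ∀ i j, j < i → ((Mt t) i j).degree < (P j).degree := by
  intro i j h
  rw [degree_eq_natDegree (hP j).ne_zero]
  simpa [Mt, dif_pos h] using (Polynomial.mem_degreeLT.1 (t ⟨(i, j), h⟩).2)

private noncomputable def Phi {k : Type*} [Field k] {n : ℕ} {P : Fin n → Polynomial k}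
    (hP : ∀ i, (P i).Monic) (t : Tt k P) :
    {R : Submodule (Polynomial k) (Fin n → Polynomial k) //
      ∃ Rm : Fin n → Fin n → Polynomial k,
        (∀ i j : Fin n, j < i → (Rm i j).degree < (P j).degree) ∧
        R = Submodule.span (Polynomial k)
          (Set.range fun i : Fin n => fun l : Fin n =>
            if l = i then P i else if l < i then Rm i l else 0)} :=
  ⟨Submodule.span (Polynomial k) (Set.range (vv P (Mt t))),
    Mt t, fun i j h => Mt_deg hP t i j h, rfl⟩

private lemma Phi_bij {k : Type*} [Field k] {n : ℕ} {P : Fin n → Polynomial k}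
    (hP : ∀ i, (P i).Monic) : Function.Bijective (Phi hP) := by
  constructor
  · intro t t' h
    have hsp : Submodule.span (Polynomial k) (Set.range (vv P (Mt t))) =
        Submodule.span (Polynomial k) (Set.range (vv P (Mt t'))) :=
      congrArg Subtype.val h
    funext p
    obtain ⟨⟨i, j⟩, hji⟩ := p
    have hmem : vv P (Mt t') i ∈
        Submodule.span (Polynomial k) (Set.range (vv P (Mt t))) := by
      rw [hsp]
      exact Submodule.subset_span ⟨i, rfl⟩
    have hk := key P hP (Mt t) (Mt t') (fun i j h => Mt_deg hP t i j h)
      (fun i j h => Mt_deg hP t' i j h) i hmem j hji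
    apply Subtype.ext
    simpa [Mt, dif_pos hji] using hk
  · rintro ⟨R, Rm, hdeg, rfl⟩
    refine ⟨fun p => ⟨Rm p.1.1 p.1.2,
      Polynomial.mem_degreeLT.2 (by
        rw [← degree_eq_natDegree (hP p.1.2).ne_zero]; exact hdeg _ _ p.2)⟩, ?_⟩
    apply Subtype.ext
    show Submodule.span (Polynomial k) (Set.range (vv P (Mt _))) = _
    apply congrArg
    apply congrArg
    funext i l
    simp only [vv, Mt]
    by_cases h1 : l = i
    · simp [h1]
    · by_cases h2 : l < i
      · simp [h1, h2]
      · simp [h1, h2]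

theorem stmt8 (k : Type*) [Field k] [Fintype k] (n : ℕ) (P : Fin n → Polynomial k)
    (hP : ∀ i : Fin n, (P i).Monic) :
    Nat.card {R : Submodule (Polynomial k) (Fin n → Polynomial k) //
      ∃ Rm : Fin n → Fin n → Polynomial k,
        (∀ i j : Fin n, j < i → (Rm i j).degree < (P j).degree) ∧
        R = Submodule.span (Polynomial k)
          (Set.range fun i : Fin n => fun l : Fin n =>
            if l = i then P i else if l < i then Rm i l else 0)} =
    (Fintype.card k) ^ (∑ j : Fin n, (n - 1 - (j : ℕ)) * (P j).natDegree) := by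
  classical
  have hcard := Nat.card_congr (Equiv.ofBijective _ (Phi_bij hP))
  rw [← hcard]
  have hcardT : Nat.card (Tt k P) =
      (Fintype.card k) ^ ∑ p : {p : Fin n × Fin n // p.2 < p.1}, (P p.1.2).natDegree := by
    rw [Tt, Nat.card_pi]
    have hc : ∀ p : {p : Fin n × Fin n // p.2 < p.1},
        Nat.card (Polynomial.degreeLT k ((P p.1.2).natDegree)) =
          (Fintype.card k) ^ ((P p.1.2).natDegree) := by
      intro p
      rw [Nat.card_congr (Polynomial.degreeLTEquiv k ((P p.1.2).natDegree)).toEquiv,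
        Nat.card_eq_fintype_card, Fintype.card_fun, Fintype.card_fin]
    rw [Finset.prod_congr rfl (fun p _ => hc p), Finset.prod_pow_eq_pow_sum]
  rw [hcardT]
  congr 1
  rw [← Finset.sum_subtype (Finset.univ.filter fun p : Fin n × Fin n => p.2 < p.1)
    (by simp) (fun p => (P p.2).natDegree)]
  rw [Finset.sum_filter, ← Finset.univ_product_univ, Finset.sum_product, Finset.sum_comm]
  refine Finset.sum_congr rfl fun j _ => ?_
  rw [← Finset.sum_filter]
  show ∑ _a ∈ Finset.filter (fun a : Fin n => j < a) Finset.univ, (P j).natDegree = _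
  rw [Finset.sum_const, smul_eq_mul, Finset.filter_lt_eq_Ioi, Fin.card_Ioi]
end

section
/- Fix natural numbers λ_1, …, λ_n, set d = λ_1 + ⋯ + λ_n, and let V be the k-linear span in Oⁿ of the vectors X^j·e_i for 1 ≤ i ≤ n and 0 ≤ j < λ_i. The map sending a tuple (v_1, …, v_n) ∈ Vⁿ to the O-submodule of Oⁿ generated by the vectors X^{λ_i}·e_i + v_i (1 ≤ i ≤ n) is a bijection from Vⁿ onto the set of O-submodules R of Oⁿ with dim_k(Oⁿ/R) = d and R ∩ V = 0. Moreover, for each such submodule R one has Oⁿ = R ⊕ V as k-vector spaces. -/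
/-- The lattice generated by the vectors `X^{λ_i}·e_i + v_i`. -/
noncomputable def latticeOf {k : Type*} [Field k] {n : ℕ} (lam : Fin n → ℕ)
    (V : Submodule k (Fin n → Polynomial k)) (v : Fin n → V) :
    Submodule (Polynomial k) (Fin n → Polynomial k) :=
  Submodule.span (Polynomial k)
    (Set.range fun i : Fin n =>
      Pi.single i (Polynomial.X ^ lam i) + (v i : Fin n → Polynomial k))

/-!
`V` is the space of tuples `f` with `deg fᵢ < λᵢ`. For every `v`, the lattice `L(v)` generated
by `gᵢ = X^{λᵢ} eᵢ + vᵢ` is a `k`-linear complement of `V`. It meets `V` trivially: in a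
combination `∑ cᵢ gᵢ` with `cⱼ ≠ 0` of maximal degree `D`, the `j`-th coordinate has coefficient
`lead(cⱼ) ≠ 0` at `X^{λⱼ + D}`, as the `vᵢ` contribute only in lower degrees. And `L(v) + V` is
stable under multiplication by `X`, because `X^{λᵢ} eᵢ = gᵢ - vᵢ`, so it is an `O`-submodule
containing every `eᵢ`. Hence `Oⁿ/L(v) ≅ V` has dimension `d`, and `v` is recovered from `L(v)`
as the `V`-component of `-X^{λᵢ} eᵢ`.

Conversely, if `R ∩ V = 0` and `dim Oⁿ/R = d = dim V`, then `V → Oⁿ/R` is an isomorphism, so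
`Oⁿ = R ⊕ V`. Writing `X^{λᵢ} eᵢ = rᵢ - vᵢ` gives `L(v) ⊆ R`, and two complements of `V`, one
contained in the other, coincide.
-/

section

open Polynomial Submodule

def Submodule.piUnivEquiv {R ι : Type*} [Semiring R] {M : ι → Type*}
    [∀ i, AddCommMonoid (M i)] [∀ i, Module R (M i)] (p : ∀ i, Submodule R (M i)) :
    pi Set.univ p ≃ₗ[R] ∀ i, p i :=
  { Equiv.Set.univPi fun i => (p i : Set (M i)) with
    map_add' := fun _ _ => rfl
    map_smul' := fun _ _ => rfl }

theorem Polynomial.smul_mem_of_X_smul_mem {k M : Type*} [CommSemiring k] [AddCommMonoid M]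
    [Module k[X] M] [Module k M] [IsScalarTower k k[X] M] {S : Submodule k M}
    (hS : ∀ m ∈ S, (X : k[X]) • m ∈ S) (p : k[X]) {m : M} (hm : m ∈ S) : p • m ∈ S := by
  induction p using Polynomial.induction_on generalizing m with
  | C a => rw [← algebraMap_eq, algebraMap_smul]; exact S.smul_mem a hm
  | add p q hp hq => rw [add_smul]; exact S.add_mem (hp hm) (hq hm)
  | monomial j a ih => rw [pow_succ, ← mul_assoc, mul_smul]; exact ih (hS m hm)

theorem Submodule.isCompl_of_disjoint_of_finrank_quotient_eq {k E : Type*} [Field k]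
    [AddCommGroup E] [Module k E] {P Q : Submodule k E} [FiniteDimensional k Q]
    [FiniteDimensional k (E ⧸ P)] (hPQ : Disjoint P Q)
    (hfin : Module.finrank k (E ⧸ P) = Module.finrank k Q) : IsCompl P Q := by
  have hinj : Function.Injective (P.mkQ ∘ₗ Q.subtype) := by
    rw [← LinearMap.ker_eq_bot, LinearMap.ker_comp, ker_mkQ, ← disjoint_iff_comap_eq_bot,
      disjoint_comm]
    exact hPQ
  have hsurj := (LinearMap.injective_iff_surjective_of_finrank_eq_finrank hfin.symm).1 hinj
  refine ⟨hPQ, codisjoint_iff.2 ?_⟩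
  rw [← comap_map_mkQ, ← Q.range_subtype, ← LinearMap.range_comp,
    LinearMap.range_eq_top.2 hsurj, comap_top]

variable {k ι : Type*} [Field k]

variable (k) in
noncomputable def degreeLTPi (lam : ι → ℕ) : Submodule k (ι → k[X]) :=
  pi Set.univ fun i => degreeLT k (lam i)

theorem span_single_X_pow_eq_degreeLTPi [Finite ι] [DecidableEq ι] (lam : ι → ℕ) :
    span k {w : ι → k[X] | ∃ (i : ι) (j : ℕ), j < lam i ∧ w = Pi.single i (X ^ j)} =
      degreeLTPi k lam := by
  classical
  rw [degreeLTPi, ← iSup_map_single]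
  simp_rw [degreeLT_eq_span_X_pow, map_span, ← span_iUnion]
  congr 1
  ext w
  simp [eq_comm]

theorem coeff_eq_zero_of_mem_degreeLTPi {lam : ι → ℕ} {f : ι → k[X]} (hf : f ∈ degreeLTPi k lam)
    {i : ι} {m : ℕ} (hm : lam i ≤ m) : (f i).coeff m = 0 :=
  coeff_eq_zero_of_degree_lt <| (mem_degreeLT.1 (hf i trivial)).trans_le (by exact_mod_cast hm)

instance [Finite ι] (lam : ι → ℕ) : FiniteDimensional k (degreeLTPi k lam) := by
  cases nonempty_fintype ι
  exact .equiv (piUnivEquiv _).symm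

theorem finrank_degreeLTPi [Fintype ι] (lam : ι → ℕ) :
    Module.finrank k (degreeLTPi k lam) = ∑ i, lam i := by
  rw [degreeLTPi, (piUnivEquiv _).finrank_eq, Module.finrank_pi_fintype]
  simp [(degreeLTEquiv k _).finrank_eq]

theorem coeff_sum_smul_single_X_pow_add [Fintype ι] [DecidableEq ι] {lam : ι → ℕ}
    (v : ι → degreeLTPi k lam) {c : ι → k[X]} {D : ℕ} (hD : ∀ i, (c i).natDegree ≤ D) (j : ι) :
    ((∑ i, c i • (Pi.single i (X ^ lam i) + (v i : ι → k[X])) : ι → k[X]) j).coeff (lam j + D) =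
      (c j).coeff D := by
  have hv : ∀ i, (c i * (v i : ι → k[X]) j).coeff (lam j + D) = 0 := fun i => by
    rw [coeff_mul]
    refine Finset.sum_eq_zero fun ⟨a, b⟩ hab => ?_
    rw [Finset.HasAntidiagonal.mem_antidiagonal] at hab
    rcases le_or_gt a D with ha | ha
    · rw [coeff_eq_zero_of_mem_degreeLTPi (v i).2 (by omega : lam j ≤ b), mul_zero]
    · rw [coeff_eq_zero_of_natDegree_lt ((hD i).trans_lt ha), zero_mul]
  have hj : (∑ i, c i • (Pi.single i (X ^ lam i) + (v i : ι → k[X])) : ι → k[X]) j =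
      c j * X ^ lam j + ∑ i, c i * (v i : ι → k[X]) j := by
    simp [Finset.sum_add_distrib, Pi.single_apply]
  rw [hj, coeff_add, finsetSum_coeff, Finset.sum_eq_zero fun i _ => hv i, add_zero, add_comm,
    coeff_mul_X_pow]

section Lattice

variable {n : ℕ} {lam : Fin n → ℕ}

theorem disjoint_latticeOf (v : Fin n → degreeLTPi k lam) :
    Disjoint ((latticeOf lam (degreeLTPi k lam) v).restrictScalars k) (degreeLTPi k lam) := by
  classical
  rw [disjoint_def]
  intro x hxL hxW
  obtain ⟨c, rfl⟩ := (mem_span_range_iff_exists_fun k[X]).1 hxL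
  suffices c = 0 by simp [this]
  by_contra hc
  obtain ⟨i₀, hi₀⟩ := Function.ne_iff.1 hc
  obtain ⟨j, hj, hmax⟩ := (Finset.univ.filter (c · ≠ 0)).exists_max_image
    (fun i => (c i).natDegree) ⟨i₀, by simpa using hi₀⟩
  have hD : ∀ i, (c i).natDegree ≤ (c j).natDegree := fun i => by
    by_cases hi : c i = 0
    · simp [hi]
    · exact hmax i (by simpa using hi)
  have hcoeff := coeff_sum_smul_single_X_pow_add v hD j
  rw [coeff_eq_zero_of_mem_degreeLTPi hxW le_self_add] at hcoeff
  exact leadingCoeff_ne_zero.2 (by simpa using hj) hcoeff.symm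

theorem single_X_pow_mem_latticeOf_sup (v : Fin n → degreeLTPi k lam) {i : Fin n} {j : ℕ}
    (hj : j ≤ lam i) :
    Pi.single i (X ^ j) ∈
      (latticeOf lam (degreeLTPi k lam) v).restrictScalars k ⊔ degreeLTPi k lam := by
  rcases hj.lt_or_eq with hj | rfl
  · exact mem_sup_right <|
      span_single_X_pow_eq_degreeLTPi (k := k) lam ▸ subset_span ⟨i, j, hj, rfl⟩
  · rw [← add_sub_cancel_right (Pi.single i (X ^ lam i)) (v i : Fin n → k[X])]
    exact sub_mem (mem_sup_left (subset_span ⟨i, rfl⟩)) (mem_sup_right (v i).2)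

theorem latticeOf_sup_degreeLTPi (v : Fin n → degreeLTPi k lam) :
    (latticeOf lam (degreeLTPi k lam) v).restrictScalars k ⊔ degreeLTPi k lam = ⊤ := by
  set S := (latticeOf lam (degreeLTPi k lam) v).restrictScalars k ⊔ degreeLTPi k lam
  have hXW : ∀ w ∈ degreeLTPi k lam, (X : k[X]) • w ∈ S := fun w hw => by
    rw [← span_single_X_pow_eq_degreeLTPi] at hw
    induction hw using span_induction with
    | mem w hw =>
      obtain ⟨i, j, hj, rfl⟩ := hw
      rw [← Pi.single_smul, smul_eq_mul, ← pow_succ']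
      exact single_X_pow_mem_latticeOf_sup v hj
    | zero => simp
    | add w w' _ _ hw hw' => rw [smul_add]; exact add_mem hw hw'
    | smul a w _ hw => rw [smul_comm]; exact S.smul_mem a hw
  have hX : ∀ m ∈ S, (X : k[X]) • m ∈ S := fun m hm => by
    obtain ⟨l, hl, w, hw, rfl⟩ := mem_sup.1 hm
    rw [smul_add]
    exact add_mem (mem_sup_left (smul_mem _ X hl)) (hXW w hw)
  refine eq_top_iff.2 fun x _ => ?_
  rw [← Finset.univ_sum_single x]
  refine sum_mem fun i _ => ?_
  simpa [← Pi.single_smul] using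
    smul_mem_of_X_smul_mem hX (x i) (single_X_pow_mem_latticeOf_sup v (Nat.zero_le (lam i)))

theorem isCompl_latticeOf (v : Fin n → degreeLTPi k lam) :
    IsCompl ((latticeOf lam (degreeLTPi k lam) v).restrictScalars k) (degreeLTPi k lam) :=
  ⟨disjoint_latticeOf v, codisjoint_iff.2 (latticeOf_sup_degreeLTPi v)⟩

theorem latticeOf_injective : Function.Injective (latticeOf lam (degreeLTPi k lam)) := by
  intro v w h
  funext i
  have hL : ∀ u : Fin n → degreeLTPi k lam,
      Pi.single i (X ^ lam i) + (u i : Fin n → k[X]) ∈ latticeOf lam (degreeLTPi k lam) u :=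
    fun u => subset_span ⟨i, rfl⟩
  have hdiff : (v i : Fin n → k[X]) - w i ∈ latticeOf lam (degreeLTPi k lam) w := by
    have := sub_mem (h ▸ hL v) (hL w)
    rwa [add_sub_add_left_eq_sub] at this
  exact Subtype.ext <| sub_eq_zero.1 <|
    disjoint_def.1 (disjoint_latticeOf w) _ hdiff (sub_mem (v i).2 (w i).2)

theorem exists_eq_latticeOf {R : Submodule k[X] (Fin n → k[X])}
    (hR : IsCompl (R.restrictScalars k) (degreeLTPi k lam)) :
    ∃ v, R = latticeOf lam (degreeLTPi k lam) v := by
  have hdecomp : ∀ i, ∃ r ∈ R.restrictScalars k, ∃ w ∈ degreeLTPi k lam,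
      r + w = Pi.single i (X ^ lam i) := fun i => mem_sup.1 (hR.sup_eq_top ▸ mem_top)
  choose r hr w hw hrw using hdecomp
  let v : Fin n → degreeLTPi k lam := fun i => ⟨-w i, neg_mem (hw i)⟩
  have hle : latticeOf lam (degreeLTPi k lam) v ≤ R := span_le.2 <| by
    rintro _ ⟨i, rfl⟩
    simpa [v, ← hrw i] using hr i
  refine ⟨v, restrictScalars_injective k _ _
    (eq_of_le_of_inf_le_of_sup_le (z := degreeLTPi k lam) (restrictScalars_mono k hle) ?_ ?_).symm⟩
  · rw [hR.inf_eq_bot]; exact bot_le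
  · rw [latticeOf_sup_degreeLTPi]; exact le_top

end Lattice

end

theorem stmt9 (k : Type*) [Field k] (n : ℕ) (lam : Fin n → ℕ) (d : ℕ)
    (hd : d = ∑ i : Fin n, lam i)
    (V : Submodule k (Fin n → Polynomial k))
    (hV : V = Submodule.span k
      {w : Fin n → Polynomial k |
        ∃ (i : Fin n) (j : ℕ), j < lam i ∧ w = Pi.single i (Polynomial.X ^ j)}) :
    (∀ v : Fin n → V,
      Module.Finite k ((Fin n → Polynomial k) ⧸ latticeOf lam V v) ∧
      Module.finrank k ((Fin n → Polynomial k) ⧸ latticeOf lam V v) = d ∧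
      (latticeOf lam V v).restrictScalars k ⊓ V = ⊥) ∧
    Function.Injective (fun v : Fin n → V => latticeOf lam V v) ∧
    (∀ R : Submodule (Polynomial k) (Fin n → Polynomial k),
      Module.Finite k ((Fin n → Polynomial k) ⧸ R) →
      Module.finrank k ((Fin n → Polynomial k) ⧸ R) = d →
      R.restrictScalars k ⊓ V = ⊥ →
      (∃ v : Fin n → V, R = latticeOf lam V v) ∧
      R.restrictScalars k ⊔ V = ⊤) := by
  obtain rfl : V = degreeLTPi k lam := hV.trans (span_single_X_pow_eq_degreeLTPi lam)
  refine ⟨fun v => ?_, latticeOf_injective, fun R _ hrank hdisj => ?_⟩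
  · have e := (Submodule.Quotient.restrictScalarsEquiv k _).symm ≪≫ₗ
      Submodule.quotientEquivOfIsCompl _ _ (isCompl_latticeOf v)
    exact ⟨.equiv e.symm, by rw [e.finrank_eq, finrank_degreeLTPi, hd],
      (isCompl_latticeOf v).inf_eq_bot⟩
  · have e := Submodule.Quotient.restrictScalarsEquiv k R
    have : FiniteDimensional k (_ ⧸ R.restrictScalars k) := .equiv e.symm
    have hR : IsCompl (R.restrictScalars k) (degreeLTPi k lam) :=
      Submodule.isCompl_of_disjoint_of_finrank_quotient_eq (disjoint_iff.2 hdisj)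
        (by rw [e.finrank_eq, hrank, hd, finrank_degreeLTPi])
    exact ⟨exists_eq_latticeOf hR, hR.sup_eq_top⟩
end

section
/- The assignment g ↦ g·Oⁿ (the O-submodule of Oⁿ generated by the columns of g) induces a bijection from the set of n×n matrices g over O with det g ≠ 0, taken modulo right multiplication by GL_n(O), onto the set of O-submodules R of Oⁿ with dim_k(Oⁿ/R) finite. In particular, if g and g' are two such matrices with g·Oⁿ = g'·Oⁿ, then det g' = c·det g for some nonzero scalar c ∈ k. -/
/-!
The quotient `Oⁿ / R` is finite-dimensional over `k` exactly when some nonzero `d ∈ O` kills it: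
an infinite-dimensional algebra cannot act faithfully on a finite-dimensional space, and
conversely `Oⁿ / R` is then a quotient of `(O / d)ⁿ`. Such an `R` sits between `d • Oⁿ` and `Oⁿ`,
so over the PID `O` it is free of rank `n`, and a basis gives a matrix with nonzero determinant.
Two matrices with the same column span and nonzero determinant differ by matrices `U`, `V` with
`g U V = g`; as `g` is cancellable, `U` is invertible and `det U` is a unit of `k[X]`, a nonzero
constant.
-/

open Polynomial Matrix

theorem Module.exists_ne_zero_smul_eq_zero_of_not_finite {k A M : Type*} [Field k] [Ring A]
    [Algebra k A] [AddCommGroup M] [Module A M] [Module k M] [IsScalarTower k A M]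
    [Module.Finite k M] (hA : ¬ Module.Finite k A) : ∃ a : A, a ≠ 0 ∧ ∀ m : M, a • m = 0 := by
  by_contra! h
  let act : A →ₐ[k] Module.End k M := Algebra.lsmul k k M
  have hinj : Function.Injective act := (injective_iff_map_eq_zero _).2 fun a ha => by
    by_contra ha0
    obtain ⟨m, hm⟩ := h a ha0
    exact hm (LinearMap.congr_fun ha m)
  exact hA (.of_injective act.toLinearMap hinj)

namespace Submodule

theorem exists_ne_zero_smul_mem_of_finite_quotient {k M : Type*} [Field k] [AddCommGroup M]
    [Module k[X] M] [Module k M] [IsScalarTower k k[X] M] {R : Submodule k[X] M}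
    [Module.Finite k (M ⧸ R)] : ∃ d : k[X], d ≠ 0 ∧ ∀ x : M, d • x ∈ R := by
  obtain ⟨d, hd, hdR⟩ :=
    Module.exists_ne_zero_smul_eq_zero_of_not_finite (M := M ⧸ R) (Polynomial.not_finite (R := k))
  exact ⟨d, hd, fun x => (Quotient.mk_eq_zero R).mp (hdR (Quotient.mk x))⟩

theorem finite_quotient_of_smul_mem {k ι : Type*} [Field k] [Finite ι]
    {R : Submodule k[X] (ι → k[X])} {d : k[X]} (hd : d ≠ 0) (hdR : ∀ x, d • x ∈ R) :
    Module.Finite k ((ι → k[X]) ⧸ R) := by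
  classical
  have := Fintype.ofFinite ι
  let D : Submodule k[X] (ι → k[X]) := pi Set.univ fun _ => Ideal.span {d}
  have hDR : D ≤ R := fun x hx => by
    choose c hc using fun i => Ideal.mem_span_singleton.mp (hx i trivial)
    simpa [show x = d • c from funext hc] using hdR c
  have : Module.Finite k (k[X] ⧸ Ideal.span {d}) := (AdjoinRoot.powerBasis hd).finite
  have : Module.Finite k ((ι → k[X]) ⧸ D) :=
    .equiv ((quotientPi fun _ => Ideal.span {d}).restrictScalars k).symm
  exact .of_surjective ((factor hDR).restrictScalars k) (factor_surjective hDR)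

variable {A : Type*} [CommRing A] [IsDomain A] {n : ℕ} {R : Submodule A (Fin n → A)}

theorem finrank_eq_of_smul_mem {d : A} (hd : d ≠ 0) (hdR : ∀ x, d • x ∈ R) :
    Module.finrank A R = n := by
  refine Module.finrank_eq_of_rank_eq (le_antisymm ?_ ?_)
  · simpa using R.rank_le
  · have := LinearMap.rank_le_of_injective ((d • LinearMap.id).codRestrict R hdR)
      fun x y hxy => smul_right_injective _ hd (congrArg Subtype.val hxy)
    simpa using this

theorem _root_.Matrix.det_ne_zero_of_mulVec_injective {ι : Type*} [Fintype ι] [DecidableEq ι]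
    {M : Matrix ι ι A} (h : Function.Injective M.mulVec) : M.det ≠ 0 := fun h0 => by
  obtain ⟨v, hv, hMv⟩ := exists_mulVec_eq_zero_iff.mpr h0
  exact hv (h (hMv.trans M.mulVec_zero.symm))

theorem exists_matrix_det_ne_zero_range_eq [IsPrincipalIdealRing A]
    (hR : Module.finrank A R = n) :
    ∃ g : Matrix (Fin n) (Fin n) A, g.det ≠ 0 ∧ LinearMap.range g.mulVecLin = R := by
  let b := Module.finBasisOfFinrankEq A R hR
  let f := R.subtype ∘ₗ b.equivFun.symm.toLinearMap
  have hf : (LinearMap.toMatrix' f).mulVecLin = f := by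
    rw [← toLin'_apply', toLin'_toMatrix']
  refine ⟨LinearMap.toMatrix' f, det_ne_zero_of_mulVec_injective ?_, ?_⟩
  · rw [show (LinearMap.toMatrix' f).mulVec = f from congrArg DFunLike.coe hf]
    exact R.injective_subtype.comp b.equivFun.symm.injective
  · rw [hf, LinearMap.range_comp_of_range_eq_top _ (LinearEquiv.range _), range_subtype]

end Submodule

namespace Matrix

variable {A m n p : Type*} [CommRing A] [Fintype n] [Fintype p]

theorem det_smul_mem_range_mulVecLin [DecidableEq n] (M : Matrix n n A) (x : n → A) :
    M.det • x ∈ LinearMap.range M.mulVecLin :=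
  ⟨M.adjugate *ᵥ x, by rw [mulVecLin_apply, mulVec_mulVec, mul_adjugate, smul_mulVec, one_mulVec]⟩

theorem exists_eq_mul_of_range_mulVecLin_le [DecidableEq p] {M : Matrix m n A}
    {N : Matrix m p A} (h : LinearMap.range N.mulVecLin ≤ LinearMap.range M.mulVecLin) :
    ∃ U : Matrix n p A, N = M * U := by
  choose v hv using fun j => h (show N.col j ∈ _ from ⟨Pi.single j 1, by simp⟩)
  refine ⟨(of v)ᵀ, ext fun i j => ?_⟩
  simpa [mul_apply, mulVec, dotProduct] using (congrFun (hv j) i).symm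

theorem range_mulVecLin_mul_of_isUnit_det [DecidableEq n] {M : Matrix m n A}
    {U : Matrix n n A} (hU : IsUnit U.det) :
    LinearMap.range (M * U).mulVecLin = LinearMap.range M.mulVecLin := by
  rw [mulVecLin_mul]
  refine LinearMap.range_comp_of_range_eq_top _ (LinearMap.range_eq_top.2 fun y => ⟨U⁻¹ *ᵥ y, ?_⟩)
  rw [mulVecLin_apply, mulVec_mulVec, mul_nonsing_inv _ hU, one_mulVec]

theorem range_mulVecLin_eq_iff [IsDomain A] [DecidableEq n] {M N : Matrix n n A}
    (hM : M.det ≠ 0) :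
    LinearMap.range M.mulVecLin = LinearMap.range N.mulVecLin ↔
      ∃ U : Matrix n n A, IsUnit U.det ∧ N = M * U := by
  refine ⟨fun h => ?_, fun ⟨U, hU, hN⟩ => hN ▸ (range_mulVecLin_mul_of_isUnit_det hU).symm⟩
  obtain ⟨U, hU⟩ := exists_eq_mul_of_range_mulVecLin_le h.ge
  obtain ⟨V, hV⟩ := exists_eq_mul_of_range_mulVecLin_le h.le
  have hUV : U * V = 1 := isLeftRegular_iff_mulVec_injective.2 (mulVec_injective_of_det_ne_zero hM)
    (show M * (U * V) = M * 1 by rw [← mul_assoc, ← hU, ← hV, mul_one])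
  exact ⟨U, isUnit_det_of_right_inverse hUV, hU⟩

end Matrix

theorem stmt10 (k : Type*) [Field k] (n : ℕ) :
    (∀ g : Matrix (Fin n) (Fin n) (Polynomial k), g.det ≠ 0 →
      Module.Finite k ((Fin n → Polynomial k) ⧸ LinearMap.range g.mulVecLin)) ∧
    (∀ R : Submodule (Polynomial k) (Fin n → Polynomial k),
      Module.Finite k ((Fin n → Polynomial k) ⧸ R) →
      ∃ g : Matrix (Fin n) (Fin n) (Polynomial k), g.det ≠ 0 ∧
        LinearMap.range g.mulVecLin = R) ∧
    (∀ g g' : Matrix (Fin n) (Fin n) (Polynomial k), g.det ≠ 0 → g'.det ≠ 0 →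
      (LinearMap.range g.mulVecLin = LinearMap.range g'.mulVecLin ↔
        ∃ u : Matrix (Fin n) (Fin n) (Polynomial k), IsUnit u.det ∧ g' = g * u)) ∧
    (∀ g g' : Matrix (Fin n) (Fin n) (Polynomial k), g.det ≠ 0 → g'.det ≠ 0 →
      LinearMap.range g.mulVecLin = LinearMap.range g'.mulVecLin →
      ∃ c : k, c ≠ 0 ∧ g'.det = Polynomial.C c * g.det) := by
  refine ⟨fun g hg => Submodule.finite_quotient_of_smul_mem hg g.det_smul_mem_range_mulVecLin,
    fun R _ => ?_, fun g _ hg _ => range_mulVecLin_eq_iff hg, fun g _ hg _ hrange => ?_⟩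
  · obtain ⟨d, hd, hdR⟩ := R.exists_ne_zero_smul_mem_of_finite_quotient (k := k)
    exact Submodule.exists_matrix_det_ne_zero_range_eq (Submodule.finrank_eq_of_smul_mem hd hdR)
  · obtain ⟨u, hu, rfl⟩ := (range_mulVecLin_eq_iff hg).mp hrange
    obtain ⟨c, hc, hcu⟩ := Polynomial.isUnit_iff.mp hu
    exact ⟨c, hc.ne_zero, by rw [det_mul, ← hcu, mul_comm]⟩
end

section
/- Let R be an O-submodule of Oⁿ with dim_k(Oⁿ/R) finite and let a ∈ k. Then dim_k(R/(X−a)·R) = n, and every k-vector subspace W with (X−a)·R ⊆ W ⊆ R is an O-submodule of Oⁿ. -/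
/-- If a submodule and the corresponding quotient are finite, so is the module. -/
private lemma fd_of_sub_quot {K V : Type*} [Field K] [AddCommGroup V] [Module K V]
    (p : Submodule K V) (h1 : FiniteDimensional K p) (h2 : FiniteDimensional K (V ⧸ p)) :
    FiniteDimensional K V := by
  rw [FiniteDimensional, Module.finite_def]
  refine Submodule.fg_of_fg_map_of_fg_inf_ker p.mkQ ?_ ?_
  · rw [Submodule.map_top, Submodule.range_mkQ, ← Module.finite_def]; exact h2
  · rw [Submodule.ker_mkQ, top_inf_eq, ← Module.Finite.iff_fg]; exact h1

set_option maxHeartbeats 1000000 in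
theorem stmt11 (k : Type*) [Field k] (n : ℕ)
    (R : Submodule (Polynomial k) (Fin n → Polynomial k))
    (hfin : Module.Finite k ((Fin n → Polynomial k) ⧸ R)) (a : k) :
    Module.finrank k
      (R ⧸ (Submodule.map
        (LinearMap.lsmul (Polynomial k) (Fin n → Polynomial k)
          (Polynomial.X - Polynomial.C a)) R).comap R.subtype) = n ∧
    (∀ W : Submodule k (Fin n → Polynomial k),
      (Submodule.map
        (LinearMap.lsmul (Polynomial k) (Fin n → Polynomial k)
          (Polynomial.X - Polynomial.C a)) R).restrictScalars k ≤ W →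
      W ≤ R.restrictScalars k →
      ∃ W' : Submodule (Polynomial k) (Fin n → Polynomial k),
        W'.restrictScalars k = W) := by
  classical
  set t : Polynomial k := Polynomial.X - Polynomial.C a with ht_def
  set N : Submodule (Polynomial k) (Fin n → Polynomial k) :=
    Submodule.map (LinearMap.lsmul (Polynomial k) (Fin n → Polynomial k) t) R with hN_def
  have ht0 : t ≠ 0 := Polynomial.X_sub_C_ne_zero a
  have htinj : ∀ v w : Fin n → Polynomial k, t • v = t • w → v = w := by
    intro v w h
    funext i
    have := congrFun h i
    simp only [Pi.smul_apply, smul_eq_mul] at this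
    exact mul_left_cancel₀ ht0 this
  have hNR : N ≤ R := by
    rintro x ⟨r, hr, rfl⟩
    simpa using R.smul_mem t hr
  constructor
  · -- dimension count
    set M := Fin n → Polynomial k
    set S : Submodule k M := R.restrictScalars k with hS_def
    set T : Submodule k M := N.restrictScalars k with hT_def
    set l : M →ₗ[k] M :=
      (LinearMap.lsmul (Polynomial k) M t).restrictScalars k with hl_def
    have hl_apply : ∀ v : M, l v = t • v := fun v => rfl
    set F : Submodule k M := LinearMap.range l with hF_def
    have hTS : T ≤ S := fun x hx => hNR hx
    have hTF : T ≤ F := by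
      rintro x hx
      obtain ⟨r, _, rfl⟩ := hx
      exact ⟨r, rfl⟩
    -- evaluation map
    set ev : M →ₗ[k] (Fin n → k) :=
      LinearMap.pi (fun i => (Polynomial.leval a).comp (LinearMap.proj i)) with hev_def
    have hev_apply : ∀ (v : M) (i : Fin n), ev v i = (v i).eval a := fun v i => rfl
    have hker_ev : LinearMap.ker ev = F := by
      ext v
      simp only [LinearMap.mem_ker, hF_def, LinearMap.mem_range]
      constructor
      · intro hv
        have hdvd : ∀ i, t ∣ v i := by
          intro i
          rw [ht_def]
          refine Polynomial.dvd_iff_isRoot.mpr ?_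
          have := congrFun hv i
          simpa [hev_apply, Polynomial.IsRoot] using this
        refine ⟨fun i => (hdvd i).choose, ?_⟩
        funext i
        have := (hdvd i).choose_spec
        simp only [hl_apply, Pi.smul_apply, smul_eq_mul]
        exact this.symm
      · rintro ⟨w, rfl⟩
        funext i
        show Polynomial.eval a ((t • w) i) = 0
        have hwi : (t • w) i = t * w i := rfl
        rw [hwi, ht_def]
        simp
    have hsurj_ev : Function.Surjective ev := by
      intro c
      exact ⟨fun i => Polynomial.C (c i), funext fun i => by simp [hev_apply]⟩
    have e1 : (M ⧸ F) ≃ₗ[k] (Fin n → k) :=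
      (Submodule.quotEquivOfEq F (LinearMap.ker ev) hker_ev.symm).trans
        (ev.quotKerEquivOfSurjective hsurj_ev)
    haveI fdQF : FiniteDimensional k (M ⧸ F) := Module.Finite.equiv e1.symm
    have hFrank : Module.finrank k (M ⧸ F) = n := by
      rw [e1.finrank_eq, Module.finrank_pi, Fintype.card_fin]
    -- h : M ⧸ S ≃ map of F in M ⧸ T
    set h : M →ₗ[k] (M ⧸ T) := T.mkQ.comp l with hh_def
    have hkerh : LinearMap.ker h = S := by
      ext x
      simp only [hh_def, LinearMap.mem_ker, LinearMap.comp_apply, Submodule.mkQ_apply,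
        Submodule.Quotient.mk_eq_zero, hT_def, Submodule.restrictScalars_mem, hS_def]
      constructor
      · rintro hx
        obtain ⟨r, hr, heq⟩ := hx
        have : r = x := htinj r x (by simpa [hl_apply] using heq)
        exact this ▸ hr
      · intro hx
        exact ⟨x, hx, by simp [hl_apply]⟩
    have hrangeh : LinearMap.range h = F.map T.mkQ := by
      rw [hh_def, LinearMap.range_comp, hF_def]
    have e2 : (M ⧸ S) ≃ₗ[k] (F.map T.mkQ) :=
      ((Submodule.quotEquivOfEq S (LinearMap.ker h) hkerh.symm).trans
        h.quotKerEquivRange).trans (LinearEquiv.ofEq _ _ hrangeh)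
    -- g : R ⧸ (N.comap R.subtype) ≃ map of S in M ⧸ T
    set g : R →ₗ[k] (M ⧸ T) := T.mkQ.comp (R.subtype.restrictScalars k) with hg_def
    have hkerg : LinearMap.ker g = (N.comap R.subtype).restrictScalars k := by
      ext x
      simp [hg_def, hT_def]
    have hrangeg : LinearMap.range g = S.map T.mkQ := by
      rw [hg_def, LinearMap.range_comp]
      congr 1
      ext x
      simp [hS_def]
    have e3 : (↥R ⧸ (N.comap R.subtype).restrictScalars k) ≃ₗ[k] (S.map T.mkQ) :=
      ((Submodule.quotEquivOfEq _ (LinearMap.ker g) hkerg.symm).trans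
        g.quotKerEquivRange).trans (LinearEquiv.ofEq _ _ hrangeg)
    have e4 : (↥R ⧸ (N.comap R.subtype).restrictScalars k) ≃ₗ[k]
        (↥R ⧸ N.comap R.subtype) :=
      Submodule.Quotient.restrictScalarsEquiv k (N.comap R.subtype)
    -- finite dimensionality
    haveI fdQS : FiniteDimensional k (M ⧸ S) :=
      Module.Finite.equiv (Submodule.Quotient.restrictScalarsEquiv k R).symm
    haveI fdFmap : FiniteDimensional k (F.map T.mkQ) := Module.Finite.equiv e2
    have eqq : ((M ⧸ T) ⧸ (F.map T.mkQ)) ≃ₗ[k] (M ⧸ F) :=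
      Submodule.quotientQuotientEquivQuotient T F hTF
    haveI fdqq : FiniteDimensional k ((M ⧸ T) ⧸ (F.map T.mkQ)) :=
      Module.Finite.equiv eqq.symm
    haveI fdMT : FiniteDimensional k (M ⧸ T) := fd_of_sub_quot (F.map T.mkQ) fdFmap fdqq
    -- arithmetic
    have h1 : Module.finrank k ((M ⧸ T) ⧸ (S.map T.mkQ)) + Module.finrank k (S.map T.mkQ)
        = Module.finrank k (M ⧸ T) := Submodule.finrank_quotient_add_finrank _
    have h2 : Module.finrank k ((M ⧸ T) ⧸ (F.map T.mkQ)) + Module.finrank k (F.map T.mkQ)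
        = Module.finrank k (M ⧸ T) := Submodule.finrank_quotient_add_finrank _
    have hq1 : Module.finrank k ((M ⧸ T) ⧸ (S.map T.mkQ)) = Module.finrank k (M ⧸ S) :=
      (Submodule.quotientQuotientEquivQuotient T S hTS).finrank_eq
    have hq2 : Module.finrank k ((M ⧸ T) ⧸ (F.map T.mkQ)) = n := eqq.finrank_eq.trans hFrank
    have hq3 : Module.finrank k (F.map T.mkQ) = Module.finrank k (M ⧸ S) := e2.symm.finrank_eq
    have hfinal : Module.finrank k (S.map T.mkQ) = n := by omega
    calc Module.finrank k (↥R ⧸ N.comap R.subtype)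
        = Module.finrank k (↥R ⧸ (N.comap R.subtype).restrictScalars k) := e4.symm.finrank_eq
      _ = Module.finrank k (S.map T.mkQ) := e3.finrank_eq
      _ = n := hfinal
  · -- every intermediate k-subspace is an O-submodule
    intro W hNW hWR
    have hXmem : ∀ x ∈ W, (Polynomial.X : Polynomial k) • x ∈ W := by
      intro x hx
      have h1 : t • x ∈ W := hNW (by exact ⟨x, hWR hx, rfl⟩)
      have h2 : Polynomial.C a • x ∈ W := by
        have : (Polynomial.C a : Polynomial k) • x = a • x := by
          rw [← Polynomial.algebraMap_eq, algebraMap_smul]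
        rw [this]
        exact W.smul_mem a hx
      have : (Polynomial.X : Polynomial k) • x = t • x + Polynomial.C a • x := by
        rw [← add_smul, ht_def, sub_add_cancel]
      rw [this]
      exact W.add_mem h1 h2
    have hsmul : ∀ p : Polynomial k, ∀ x ∈ W, p • x ∈ W := by
      intro p
      refine Polynomial.induction_on p ?_ ?_ ?_
      · intro c x hx
        have : (Polynomial.C c : Polynomial k) • x = c • x := by
          rw [← Polynomial.algebraMap_eq, algebraMap_smul]
        rw [this]
        exact W.smul_mem c hx
      · intro p q hp hq x hx
        rw [add_smul]
        exact W.add_mem (hp x hx) (hq x hx)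
      · intro m c ih x hx
        have : (Polynomial.C c * Polynomial.X ^ (m + 1)) • x
            = (Polynomial.C c * Polynomial.X ^ m) • ((Polynomial.X : Polynomial k) • x) := by
          rw [← mul_smul]
          ring_nf
        rw [this]
        exact ih ((Polynomial.X : Polynomial k) • x) (hXmem x hx)
    refine ⟨{ carrier := (W : Set (Fin n → Polynomial k)),
              add_mem' := fun h h' => W.add_mem h h',
              zero_mem' := W.zero_mem,
              smul_mem' := fun p x hx => hsmul p x hx }, ?_⟩
    ext x
    rfl
end

section
/- Let K be a field, V a finite-dimensional K-vector space, r ≥ 1, and f : V → V a K-linear map. Let T be the unique K-linear endomorphism of the r-fold tensor power V^{⊗r} satisfying T(v_1 ⊗ v_2 ⊗ ⋯ ⊗ v_r) = f(v_r) ⊗ f(v_1) ⊗ ⋯ ⊗ f(v_{r−1}) on elementary tensors (i.e. T is the cyclic shift of tensor factors composed with f applied in every factor). Then the trace of T on V^{⊗r} equals the trace of the r-th iterate f^r on V. In particular, taking f to be the identity, the trace of the cyclic permutation of tensor factors on V^{⊗r} equals dim_K V. -/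
/-!
In the basis of `V^{⊗r}` made of tensor products of basis vectors `b_{p 0} ⊗ ⋯ ⊗ b_{p (r-1)}`,
the diagonal entry of `T` at `p` is `∏ i, M (p i) (p (i - 1))`, where `M` is the matrix of `f`.
Summing over `p` sums the weights of all closed walks of length `r`, which is `trace (M ^ r)`.
-/

open scoped TensorProduct

namespace Matrix

variable {n R : Type*} [Fintype n] [DecidableEq n] [CommSemiring R]

theorem sum_mul_prod_path_eq_trace (M : Matrix n n R) (m : ℕ) (N : Matrix n n R) :
    ∑ p : Fin (m + 1) → n, N (p 0) (p (Fin.last m)) * ∏ j : Fin m, M (p j.succ) (p j.castSucc)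
      = trace (M ^ m * N) := by
  induction m generalizing N with
  | zero =>
    rw [← (Equiv.funUnique (Fin 1) n).symm.sum_comp]
    simp [trace]
  | succ m ih =>
    rw [← (Fin.consEquiv fun _ => n).sum_comp, Fintype.sum_prod_type, Finset.sum_comm,
      pow_succ, Matrix.mul_assoc, ← ih]
    refine Finset.sum_congr rfl fun q _ => ?_
    simp only [Fin.consEquiv_apply, Fin.prod_univ_succ, ← Fin.succ_last, ← Fin.succ_castSucc,
      Fin.castSucc_zero, Fin.cons_zero, Fin.cons_succ, mul_apply, Finset.sum_mul]
    exact Finset.sum_congr rfl fun x _ => by ring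

theorem sum_prod_cyclic_eq_trace_pow (M : Matrix n n R) (r : ℕ) [NeZero r] :
    ∑ p : Fin r → n, ∏ i, M (p i) (p (i - 1)) = trace (M ^ r) := by
  obtain ⟨m, rfl⟩ := Nat.exists_eq_succ_of_ne_zero (NeZero.ne r)
  have zero_sub_one : (0 - 1 : Fin (m + 1)) = Fin.last m := Fin.ext (by simp)
  have succ_sub_one (j : Fin m) : j.succ - 1 = j.castSucc := Fin.ext (by simp [Fin.coe_sub_one])
  rw [pow_succ, ← sum_mul_prod_path_eq_trace]
  refine Finset.sum_congr rfl fun p _ => ?_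
  rw [Fin.prod_univ_succ, zero_sub_one]
  simp only [succ_sub_one]

end Matrix

theorem LinearMap.trace_eq_trace_pow_of_tprod_cyclic {R V : Type*} [CommSemiring R]
    [AddCommMonoid V] [Module R V] [Module.Free R V] [Module.Finite R V] {r : ℕ} [NeZero r]
    (f : V →ₗ[R] V) (T : (⨂[R] _ : Fin r, V) →ₗ[R] (⨂[R] _ : Fin r, V))
    (hT : ∀ v : Fin r → V, T (⨂ₜ[R] i, v i) = ⨂ₜ[R] i, f (v (i - 1))) :
    trace R _ T = trace R V (f ^ r) := by
  let b := Module.Free.chooseBasis R V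
  let B := Basis.piTensorProduct fun _ : Fin r => b
  rw [trace_eq_matrix_trace R B, trace_eq_matrix_trace R b, ← toMatrix_pow,
    ← Matrix.sum_prod_cyclic_eq_trace_pow]
  refine Finset.sum_congr rfl fun p _ => ?_
  simp [B, toMatrix_apply, hT]

theorem stmt15 (K : Type*) [Field K] (V : Type*) [AddCommGroup V] [Module K V]
    [FiniteDimensional K V] (r : ℕ) [NeZero r] (f : V →ₗ[K] V) :
    (∀ T : (⨂[K] _ : Fin r, V) →ₗ[K] (⨂[K] _ : Fin r, V),
      (∀ v : Fin r → V,
        T (⨂ₜ[K] i, v i) = ⨂ₜ[K] i, f (v (i - 1))) →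
      LinearMap.trace K _ T = LinearMap.trace K V (f ^ r)) ∧
    (∀ T : (⨂[K] _ : Fin r, V) →ₗ[K] (⨂[K] _ : Fin r, V),
      (∀ v : Fin r → V,
        T (⨂ₜ[K] i, v i) = ⨂ₜ[K] i, v (i - 1)) →
      LinearMap.trace K _ T = (Module.finrank K V : K)) := by
  refine ⟨LinearMap.trace_eq_trace_pow_of_tprod_cyclic f, fun T hT => ?_⟩
  rw [LinearMap.trace_eq_trace_pow_of_tprod_cyclic 1 T hT, one_pow, LinearMap.trace_one]
end
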